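/- arXiv:1909.11759 — 5 statements merged into one kernel-verified Lean document; each statement's English description precedes it below -/
import Mathlib

section
/- Let u_m, u_n : ℝ → ℂ be integrable and square-integrable with u_m not almost everywhere zero, let w_m ≠ 0, w_n ≠ 0, and let ω_m ≠ ω_n be real numbers. For η > 0 define T̂_j^η(k) = (1/(η|w_j|)) · û_j(k/(η w_j)) for j = m, n. Then the ratio [ ∫_ℝ |T̂_m^η(k − ω_m)| · |T̂_n^η(k − ω_n)| dk ] / [ ∫_ℝ |T̂_m^η(k − ω_m)|² dk ] tends to 0 as η → 0⁺. -/
/-!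
Substituting `k = ω_m + η w_m t` turns the ratio into `|w_m| / (|w_n| ‖û_m‖₂²)` times the
correlation `∫ |û_m t| |û_n (a_η + (w_m / w_n) t)| dt` with `a_η = (ω_m - ω_n) / (η w_n) → ±∞`.
Such a correlation of two `L²` functions, the second continuous and vanishing at infinity, tends
to `0` as the shift grows: on a ball dominated convergence applies, and outside it Cauchy–Schwarz
bounds the contribution by the `L²` tail of `û_m`. That `û_j ∈ L²` holds because on `L¹ ∩ L²` the
integral Fourier transform agrees a.e. with the `L²` (Plancherel) one; both pair with a test
function `ψ` to `∫ 𝓕ψ • u`.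
-/

open MeasureTheory Filter

/-- Fourier transform with the convention `û(k) = (1/√(2π)) ∫ u(x) e^{-ikx} dx`. -/
noncomputable def ft (u : ℝ → ℂ) (k : ℝ) : ℂ :=
  (1 / Real.sqrt (2 * Real.pi) : ℝ) *
    ∫ x : ℝ, u x * Complex.exp (-(Complex.I * (k : ℂ) * (x : ℂ)))

open FourierTransform ZeroAtInfty
open scoped Topology ENNReal SchwartzMap

section Plancherel

variable {V : Type*} [NormedAddCommGroup V] [InnerProductSpace ℝ V] [FiniteDimensional ℝ V]
  [MeasurableSpace V] [BorelSpace V]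

theorem MeasureTheory.Integrable.continuous_fourier {u : V → ℂ} (hu : Integrable u) :
    Continuous (𝓕 u) :=
  VectorFourier.fourierIntegral_continuous Real.continuous_fourierChar
    (innerSL ℝ).continuous₂ hu

theorem SchwartzMap.integral_smul_fourier_eq (g : 𝓢(V, ℂ)) {u : V → ℂ} (hu : Integrable u) :
    ∫ x, g x • 𝓕 u x = ∫ x, 𝓕 g x • u x := by
  simpa using! (VectorFourier.integral_fourierIntegral_smul_eq_flip (L := innerₗ V)
      Real.continuous_fourierChar continuous_inner g.integrable hu).symm

theorem fourier_ae_eq_fourier_toLp {u : V → ℂ} (hu1 : Integrable u) (hu2 : MemLp u 2) :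
    𝓕 u =ᵐ[volume] (𝓕 (hu2.toLp u) : Lp ℂ 2 (volume : Measure V)) := by
  refine ae_eq_of_integral_contDiff_smul_eq hu1.continuous_fourier.locallyIntegrable
    ((Lp.memLp _).locallyIntegrable (by norm_num)) fun g hg hgc => ?_
  let ψ : 𝓢(V, ℂ) := (hgc.comp_left (g := Complex.ofRealCLM) rfl).toSchwartzMap (by fun_prop)
  have hψ : ∀ x, ψ x = g x := fun x => rfl
  have h := congrArg (fun T : 𝓢'(V, ℂ) => T ψ) (Lp.fourier_toTemperedDistribution_eq (hu2.toLp u))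
  simp only [TemperedDistribution.fourier_apply, Lp.toTemperedDistribution_apply] at h
  calc ∫ x, g x • 𝓕 u x = ∫ x, ψ x • 𝓕 u x := by simp [hψ, Complex.real_smul]
    _ = ∫ x, 𝓕 ψ x • u x := ψ.integral_smul_fourier_eq hu1
    _ = ∫ x, 𝓕 ψ x • (hu2.toLp u) x :=
        integral_congr_ae (hu2.coeFn_toLp.mono fun x hx => by simp only [hx])
    _ = ∫ x, ψ x • (𝓕 (hu2.toLp u) : Lp ℂ 2 (volume : Measure V)) x := h
    _ = _ := by simp [hψ, Complex.real_smul]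

theorem memLp_two_fourier {u : V → ℂ} (hu1 : Integrable u) (hu2 : MemLp u 2) :
    MemLp (𝓕 u) 2 :=
  (Lp.memLp _).ae_eq (fourier_ae_eq_fourier_toLp hu1 hu2).symm

end Plancherel

section Correlation

variable {E F : Type*} [NormedAddCommGroup E] [NormedAddCommGroup F]

theorem MeasureTheory.MemLp.comp_const_add_mul {p : ℝ≥0∞} {g : ℝ → E} (hg : MemLp g p)
    (a : ℝ) {c : ℝ} (hc : c ≠ 0) : MemLp (fun t => g (a + c * t)) p := by
  have hmap : Measure.map (fun t : ℝ => a + c * t) volume = ENNReal.ofReal |c⁻¹| • volume := by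
    change Measure.map ((fun x => a + x) ∘ (fun x => c * x)) volume = _
    rw [← Measure.map_map (measurable_const_add a) (measurable_const_mul c),
      Real.map_volume_mul_left hc, Measure.map_smul, map_add_left_eq_self]
  exact (hmap ▸ hg.smul_measure ENNReal.ofReal_ne_top).comp_of_map (by fun_prop)

theorem integral_norm_comp_const_add_mul_sq (g : ℝ → F) (a c : ℝ) :
    ∫ t, ‖g (a + c * t)‖ ^ 2 = |c⁻¹| * ∫ t, ‖g t‖ ^ 2 := by
  rw [Measure.integral_comp_mul_left (fun y => ‖g (a + y)‖ ^ 2) c,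
    integral_add_left_eq_self (fun y => ‖g y‖ ^ 2) a, smul_eq_mul]

theorem integral_norm_mul_norm_le_sqrt {α : Type*} [MeasurableSpace α] {μ : Measure α}
    {f : α → E} {g : α → F} (hf : MemLp f 2 μ) (hg : MemLp g 2 μ) :
    ∫ x, ‖f x‖ * ‖g x‖ ∂μ ≤ √(∫ x, ‖f x‖ ^ 2 ∂μ) * √(∫ x, ‖g x‖ ^ 2 ∂μ) := by
  have h := integral_mul_norm_le_Lp_mul_Lq (μ := μ) Real.HolderConjugate.two_two
    (by simpa using hf.norm) (by simpa using hg.norm)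
  simpa only [norm_norm, Real.rpow_two, Real.sqrt_eq_rpow, one_div] using h

theorem MeasureTheory.Integrable.tendsto_setIntegral_compl_closedBall {α : Type*}
    [PseudoMetricSpace α] [MeasurableSpace α] [OpensMeasurableSpace α] {μ : Measure α}
    [NormedSpace ℝ E] {f : α → E} (hf : Integrable f μ) (x : α) :
    Tendsto (fun R : ℝ => ∫ y in (Metric.closedBall x R)ᶜ, f y ∂μ) atTop (𝓝 0) := by
  have hempty : ⋂ R : ℝ, (Metric.closedBall x R)ᶜ = ∅ :=
    Set.iInter_eq_empty_iff.2 fun y => ⟨dist y x, by simp⟩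
  simpa [hempty] using tendsto_setIntegral_of_antitone (μ := μ) (f := f)
    (s := fun R : ℝ => (Metric.closedBall x R)ᶜ) (fun R => measurableSet_closedBall.compl)
    (fun R R' h => Set.compl_subset_compl.2 (Metric.closedBall_subset_closedBall h))
    ⟨0, hf.integrableOn⟩

theorem MeasureTheory.Measure.integral_comp_sub_div [NormedSpace ℝ F] (g : ℝ → F) (ω s : ℝ) :
    ∫ k, g ((k - ω) / s) = |s| • ∫ t, g t := by
  rw [integral_sub_right_eq_self (fun k => g (k / s)) ω, Measure.integral_comp_div g s]

theorem integral_mul_comp_sub_div (φ ψ : ℝ → ℝ) (ω ω' : ℝ) {s s' : ℝ} (hs : s ≠ 0)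
    (hs' : s' ≠ 0) :
    ∫ k, φ ((k - ω) / s) * ψ ((k - ω') / s') =
      |s| * ∫ t, φ t * ψ ((ω - ω') / s' + s / s' * t) := by
  rw [← smul_eq_mul,
    ← Measure.integral_comp_sub_div (fun t => φ t * ψ ((ω - ω') / s' + s / s' * t)) ω s]
  congr with k
  congr 3
  field_simp
  ring

variable {ι : Type*} {l : Filter ι} [l.IsCountablyGenerated]

theorem tendsto_integral_norm_mul_norm_comp_of_integrable {μ : Measure ℝ} {f : ℝ → E}
    (hf : Integrable f μ) (g : C₀(ℝ, F)) (c : ℝ) {a : ι → ℝ}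
    (ha : Tendsto a l (cocompact ℝ)) :
    Tendsto (fun i => ∫ t, ‖f t‖ * ‖g (a i + c * t)‖ ∂μ) l (𝓝 0) := by
  have hlim : ∀ t, Tendsto (fun i => ‖f t‖ * ‖g (a i + c * t)‖) l (𝓝 0) := fun t => by
    have hshift : Tendsto (fun i => a i + c * t) l (cocompact ℝ) := by
      rw [← Metric.cobounded_eq_cocompact] at ha ⊢
      exact (tendsto_add_const_cobounded (c * t)).comp ha
    simpa using ((g.zero_at_infty'.comp hshift).norm).const_mul ‖f t‖
  simpa using tendsto_integral_filter_of_dominated_convergence (fun t => ‖f t‖ * ‖g.toBCF‖)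
    (Eventually.of_forall fun i => (hf.norm.aestronglyMeasurable.mul
      (g.continuous.comp (by fun_prop)).norm.aestronglyMeasurable))
    (Eventually.of_forall fun i => Eventually.of_forall fun t => by
      simpa using mul_le_mul_of_nonneg_left (g.toBCF.norm_coe_le_norm (a i + c * t))
        (norm_nonneg (f t)))
    (hf.norm.mul_const _) (Eventually.of_forall hlim)

theorem tendsto_integral_norm_mul_norm_comp_of_memLp {f : ℝ → E} (hf : MemLp f 2)
    (g : C₀(ℝ, F)) (hg : MemLp g 2) {c : ℝ} (hc : c ≠ 0) {a : ι → ℝ}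
    (ha : Tendsto a l (cocompact ℝ)) :
    Tendsto (fun i => ∫ t, ‖f t‖ * ‖g (a i + c * t)‖) l (𝓝 0) := by
  set K := |c⁻¹| * ∫ t, ‖g t‖ ^ 2
  have hga : ∀ a', MemLp (fun t => g (a' + c * t)) 2 := fun a' => hg.comp_const_add_mul a' hc
  have hint : ∀ a', Integrable (fun t => ‖f t‖ * ‖g (a' + c * t)‖) := fun a' =>
    hf.norm.integrable_mul (hga a').norm
  have htail : ∀ R a', ∫ t in (Metric.closedBall 0 R)ᶜ, ‖f t‖ * ‖g (a' + c * t)‖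
      ≤ √(∫ t in (Metric.closedBall 0 R)ᶜ, ‖f t‖ ^ 2) * √K := fun R a' => by
    refine (integral_norm_mul_norm_le_sqrt (hf.restrict _) ((hga a').restrict _)).trans
      (mul_le_mul_of_nonneg_left (Real.sqrt_le_sqrt ?_) (Real.sqrt_nonneg _))
    exact (setIntegral_le_integral ((hga a').integrable_norm_pow two_ne_zero)
      (Eventually.of_forall fun t => by positivity)).trans_eq
      (integral_norm_comp_const_add_mul_sq g a' c)
  have hsmall : Tendsto (fun R : ℝ => √(∫ t in (Metric.closedBall 0 R)ᶜ, ‖f t‖ ^ 2) * √K)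
      atTop (𝓝 0) := by
    simpa using (((hf.integrable_norm_pow two_ne_zero).tendsto_setIntegral_compl_closedBall
      0).sqrt).mul_const √K
  refine tendsto_order.2 ⟨fun b hb => Eventually.of_forall fun i =>
    hb.trans_le (integral_nonneg fun t => by positivity), fun ε hε => ?_⟩
  obtain ⟨R, hR⟩ := (hsmall.eventually (gt_mem_nhds (half_pos hε))).exists
  have : IsFiniteMeasure (volume.restrict (Metric.closedBall (0 : ℝ) R)) :=
    isFiniteMeasure_restrict.2 measure_closedBall_lt_top.ne
  have hball : Integrable f (volume.restrict (Metric.closedBall 0 R)) :=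
    (hf.restrict _).integrable one_le_two
  filter_upwards [(tendsto_integral_norm_mul_norm_comp_of_integrable hball g c ha).eventually
    (gt_mem_nhds (half_pos hε))] with i hi
  rw [← integral_add_compl measurableSet_closedBall (hint (a i))]
  linarith [htail R (a i)]

end Correlation

theorem ft_eq_fourier (u : ℝ → ℂ) (k : ℝ) :
    ft u k = (1 / Real.sqrt (2 * Real.pi) : ℝ) • 𝓕 u ((2 * Real.pi)⁻¹ * k) := by
  rw [ft, Real.fourier_real_eq_integral_exp_smul, Complex.real_smul]
  congr 2 with x
  rw [smul_eq_mul, mul_comm]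
  congr 2
  have : (Real.pi : ℂ) ≠ 0 := Complex.ofReal_ne_zero.2 Real.pi_ne_zero
  push_cast
  field_simp

theorem continuous_ft {u : ℝ → ℂ} (hu : Integrable u) : Continuous (ft u) := by
  simp_rw [funext (ft_eq_fourier u)]
  exact (hu.continuous_fourier.comp (continuous_const_mul _)).const_smul
    (1 / Real.sqrt (2 * Real.pi))

theorem tendsto_ft_cocompact (u : ℝ → ℂ) : Tendsto (ft u) (cocompact ℝ) (𝓝 0) := by
  have hscale : Tendsto (fun k : ℝ => (2 * Real.pi)⁻¹ * k) (cocompact ℝ) (cocompact ℝ) := by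
    rw [← Metric.cobounded_eq_cocompact]
    exact tendsto_mul_left_cobounded (by positivity)
  simpa [funext (ft_eq_fourier u)] using
    ((Real.zero_at_infty_fourier u).comp hscale).const_smul (1 / Real.sqrt (2 * Real.pi))

theorem memLp_ft {u : ℝ → ℂ} (hu1 : Integrable u) (hu2 : MemLp u 2) : MemLp (ft u) 2 := by
  have h := (memLp_two_fourier hu1 hu2).comp_const_add_mul 0 (c := (2 * Real.pi)⁻¹)
    (by positivity)
  simp only [zero_add] at h
  simp_rw [funext (ft_eq_fourier u)]
  exact h.const_smul (1 / Real.sqrt (2 * Real.pi))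

theorem stmt5_general (um un : ℝ → ℂ)
    (hum1 : Integrable um) (hun1 : Integrable un)
    (hum2 : MemLp um 2 (volume : Measure ℝ)) (hun2 : MemLp un 2 (volume : Measure ℝ))
    (wm wn ωm ωn : ℝ) (hwm : wm ≠ 0) (hwn : wn ≠ 0) (hω : ωm ≠ ωn) :
    Tendsto (fun η : ℝ =>
        (∫ k : ℝ, ((1 / (η * |wm|)) * ‖ft um ((k - ωm) / (η * wm))‖) *
            ((1 / (η * |wn|)) * ‖ft un ((k - ωn) / (η * wn))‖)) /
          (∫ k : ℝ, ((1 / (η * |wm|)) * ‖ft um ((k - ωm) / (η * wm))‖) ^ 2))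
      (nhdsWithin 0 (Set.Ioi 0)) (nhds 0) := by
  have hshift : Tendsto (fun η : ℝ => (ωm - ωn) / (η * wn)) (𝓝[>] 0) (cocompact ℝ) := by
    rw [← Metric.cobounded_eq_cocompact]
    refine ((tendsto_mul_left_cobounded (div_ne_zero (sub_ne_zero.2 hω) hwn)).comp
      (tendsto_inv₀_nhdsNE_zero.mono_left (nhdsWithin_mono 0 fun η (hη : 0 < η) => hη.ne'))).congr
      fun η => ?_
    simp only [Function.comp_apply]
    ring
  have hcross := (tendsto_integral_norm_mul_norm_comp_of_memLp (memLp_ft hum1 hum2)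
    ⟨⟨ft un, continuous_ft hun1⟩, tendsto_ft_cocompact un⟩ (memLp_ft hun1 hun2)
    (div_ne_zero hwm hwn) hshift).const_mul (|wm| / (|wn| * ∫ t, ‖ft um t‖ ^ 2))
  rw [mul_zero] at hcross
  refine hcross.congr' ?_
  filter_upwards [self_mem_nhdsWithin] with η (hη : 0 < η)
  rw [integral_mul_comp_sub_div (fun t => 1 / (η * |wm|) * ‖ft um t‖)
    (fun t => 1 / (η * |wn|) * ‖ft un t‖) ωm ωn (mul_ne_zero hη.ne' hwm) (mul_ne_zero hη.ne' hwn),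
    Measure.integral_comp_sub_div (fun t => (1 / (η * |wm|) * ‖ft um t‖) ^ 2)]
  simp only [mul_div_mul_left wm wn hη.ne', smul_eq_mul, mul_pow, integral_const_mul,
    ZeroAtInftyContinuousMap.coe_mk, abs_mul, abs_of_pos hη]
  field_simp
  rw [integral_div]
  field_simp

theorem stmt5 (um un : ℝ → ℂ)
    (hum1 : Integrable um) (hun1 : Integrable un)
    (hum2 : MemLp um 2 (volume : Measure ℝ)) (hun2 : MemLp un 2 (volume : Measure ℝ))
    (hum0 : ¬ um =ᵐ[(volume : Measure ℝ)] 0)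
    (wm wn ωm ωn : ℝ) (hwm : wm ≠ 0) (hwn : wn ≠ 0) (hω : ωm ≠ ωn) :
    Tendsto (fun η : ℝ =>
        (∫ k : ℝ, ((1 / (η * |wm|)) * ‖ft um ((k - ωm) / (η * wm))‖) *
            ((1 / (η * |wn|)) * ‖ft un ((k - ωn) / (η * wn))‖)) /
          (∫ k : ℝ, ((1 / (η * |wm|)) * ‖ft um ((k - ωm) / (η * wm))‖) ^ 2))
      (nhdsWithin 0 (Set.Ioi 0)) (nhds 0) :=
  stmt5_general um un hum1 hun1 hum2 hun2 wm wn ωm ωn hwm hwn hω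
end

section
/- Let g : ℝ → ℂ be integrable, let h : ℝ → ℂ be essentially bounded, let ω ∈ ℝ, w ≠ 0 and δ > 0, and assume h(k) = 0 for almost every k with |k − ω| < δ. Then (1/(η|w|)) ∫_ℝ |g((k − ω)/(η w))| · |h(k)| dk = ∫_ℝ |g(t)| · |h(ω + η w t)| dt, and this quantity tends to 0 as η → 0⁺. -/
/-!
The identity is the substitution `k = ω + η w t`. For the limit, `‖h‖ ≤ C` almost everywhere and
`h` vanishes within `δ` of `ω`, so the integrand vanishes for `|t| < δ / (η |w|)`: the integral is
at most `C` times the tail `∫_{|t| ≥ δ / (η |w|)} ‖g‖`, which tends to `0` as `η → 0⁺` since `g` is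
integrable.
-/

open MeasureTheory Filter Topology

theorem MeasureTheory.MemLp.exists_ae_norm_le {α E : Type*} [MeasurableSpace α] {μ : Measure α}
    [NormedAddCommGroup E] {f : α → E} (hf : MemLp f ⊤ μ) : ∃ C, ∀ᵐ x ∂μ, ‖f x‖ ≤ C := by
  have hfin : eLpNormEssSup f μ < ⊤ := eLpNorm_exponent_top (f := f) ▸ hf.eLpNorm_lt_top
  obtain ⟨C, hC⟩ := eLpNormEssSup_lt_top_iff_isBoundedUnder.mp hfin
  exact ⟨C, (eventually_map.mp hC).mono fun x hx => by exact_mod_cast hx⟩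

theorem quasiMeasurePreserving_add_mul (ω : ℝ) {a : ℝ} (ha : a ≠ 0) :
    Measure.QuasiMeasurePreserving (fun t : ℝ => ω + a * t) :=
  (measurePreserving_add_left volume ω).quasiMeasurePreserving.comp
    (Measure.quasiMeasurePreserving_smul volume ha)

theorem integral_comp_add_mul {E : Type*} [NormedAddCommGroup E] [NormedSpace ℝ E]
    (F : ℝ → E) (ω a : ℝ) : ∫ t, F (ω + a * t) = |a|⁻¹ • ∫ k, F k := by
  rw [Measure.integral_comp_mul_left (fun y => F (ω + y)) a, integral_add_left_eq_self, abs_inv]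

theorem MeasureTheory.Integrable.tendsto_setIntegral_le_norm {X E : Type*} [NormedAddCommGroup X]
    [MeasurableSpace X] [OpensMeasurableSpace X] {μ : Measure X} [NormedAddCommGroup E]
    [NormedSpace ℝ E] {f : X → E} (hf : Integrable f μ) :
    Tendsto (fun R : ℝ => ∫ x in {x | R ≤ ‖x‖}, f x ∂μ) atTop (𝓝 0) := by
  have hempty : (⋂ R : ℝ, {x : X | R ≤ ‖x‖}) = ∅ :=
    Set.eq_empty_of_forall_notMem fun x hx =>
      (lt_add_one ‖x‖).not_ge (Set.mem_iInter.mp hx (‖x‖ + 1))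
  simpa [hempty] using tendsto_setIntegral_of_antitone
    (fun R => measurableSet_le measurable_const measurable_norm)
    (fun R S hRS x (hx : S ≤ ‖x‖) => hRS.trans hx) ⟨0, hf.integrableOn⟩

theorem integral_norm_mul_norm_comp_add_mul_le {E F : Type*} [NormedAddCommGroup E]
    [NormedAddCommGroup F] {g : ℝ → E} {h : ℝ → F} (hg : Integrable g) {C ω δ a : ℝ}
    (hC : ∀ᵐ k, ‖h k‖ ≤ C) (hvanish : ∀ᵐ k, |k - ω| < δ → h k = 0) (ha : a ≠ 0) :
    ∫ t, ‖g t‖ * ‖h (ω + a * t)‖ ≤ C * ∫ t in {t : ℝ | δ / |a| ≤ ‖t‖}, ‖g t‖ := by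
  have hS : MeasurableSet {t : ℝ | δ / |a| ≤ ‖t‖} :=
    measurableSet_le measurable_const measurable_norm
  rw [← integral_const_mul, ← integral_indicator hS]
  refine integral_mono_of_nonneg (.of_forall fun t => by positivity)
    ((hg.norm.const_mul C).indicator hS) ?_
  filter_upwards [(quasiMeasurePreserving_add_mul ω ha).ae (hC.and hvanish)] with t ⟨htC, htδ⟩
  by_cases ht : t ∈ {t : ℝ | δ / |a| ≤ ‖t‖}
  · rw [Set.indicator_of_mem ht, mul_comm C]
    exact mul_le_mul_of_nonneg_left htC (norm_nonneg _)
  · have hnear : |ω + a * t - ω| < δ := by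
      rw [add_sub_cancel_left, abs_mul, mul_comm, ← lt_div_iff₀ (abs_pos.mpr ha)]
      simpa using ht
    rw [Set.indicator_of_notMem ht, htδ hnear, norm_zero, mul_zero]

theorem stmt6 (g h : ℝ → ℂ) (hg : Integrable g)
    (hh : MemLp h ⊤ (volume : Measure ℝ))
    (ω w δ : ℝ) (hw : w ≠ 0) (hδ : 0 < δ)
    (hvanish : ∀ᵐ k : ℝ, |k - ω| < δ → h k = 0) :
    (∀ η : ℝ, 0 < η →
      (1 / (η * |w|)) * ∫ k : ℝ, ‖g ((k - ω) / (η * w))‖ * ‖h k‖ =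
        ∫ t : ℝ, ‖g t‖ * ‖h (ω + η * w * t)‖) ∧
    Tendsto (fun η : ℝ => ∫ t : ℝ, ‖g t‖ * ‖h (ω + η * w * t)‖)
      (nhdsWithin 0 (Set.Ioi 0)) (nhds 0) := by
  refine ⟨fun η hη => ?_, ?_⟩
  · have hηw : η * w ≠ 0 := mul_ne_zero hη.ne' hw
    have hcov := integral_comp_add_mul (fun k => ‖g ((k - ω) / (η * w))‖ * ‖h k‖) ω (η * w)
    simp only [add_sub_cancel_left, mul_div_cancel_left₀ _ hηw] at hcov
    rw [hcov, smul_eq_mul, abs_mul, abs_of_pos hη, one_div]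
  obtain ⟨C, hC⟩ := hh.exists_ae_norm_le
  have hthreshold : Tendsto (fun η => δ / |η * w|) (𝓝[>] 0) atTop := by
    refine (tendsto_inv_nhdsGT_zero.const_mul_atTop (div_pos hδ (abs_pos.mpr hw))).congr' ?_
    filter_upwards [self_mem_nhdsWithin] with η (hη : 0 < η)
    rw [abs_mul, abs_of_pos hη]
    field_simp
  have htail := (hg.norm.tendsto_setIntegral_le_norm.comp hthreshold).const_mul C
  rw [mul_zero] at htail
  refine tendsto_of_tendsto_of_tendsto_of_le_of_le' tendsto_const_nhds htail
    (.of_forall fun η => integral_nonneg fun t => by positivity) ?_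
  filter_upwards [self_mem_nhdsWithin] with η (hη : 0 < η)
  exact integral_norm_mul_norm_comp_add_mul_le hg hC hvanish (mul_ne_zero hη.ne' hw)
end

section
/- Let λ > 0, c ∈ ℂ, a ≥ 2, and let ω, f : ℝ → ℂ be continuous functions vanishing outside [−1, 1]. Suppose u : ℝ → ℂ is twice differentiable and satisfies u''(x) + (λ² + c ω(x)) u(x) = f(x) for all x ∈ ℝ, together with the radiation conditions u'(x) − iλ u(x) → 0 as x → +∞ and u'(x) + iλ u(x) → 0 as x → −∞. Then u satisfies the Robin boundary conditions u'(−a) + iλ u(−a) = 0 and u'(a) − iλ u(a) = 0. -/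
/-!
Outside `[-1, 1]` the equation reads `u'' + λ² u = 0`, so `g = u' - iλu` solves `g' = -iλ g` there.
Hence `‖g‖` is constant on `(1, ∞)`, and the radiation condition at `+∞` forces `g = 0` on that
half-line, in particular at `a`. The condition at `-a` follows by applying this to `x ↦ u (-x)`.
-/

open MeasureTheory Filter

open Complex Topology

theorem norm_le_norm_of_hasDerivAt_mul_self {g : ℝ → ℂ} {μ : ℂ} {b : ℝ} (hμ : 0 ≤ μ.re)
    (hg : ∀ x, b < x → HasDerivAt g (μ * g x) x) {x y : ℝ} (hx : b < x) (hxy : x ≤ y) :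
    ‖g x‖ ≤ ‖g y‖ := by
  set H : ℝ → ℂ := fun t => exp (-μ * t) * g t
  have hH : ∀ t, b < t → HasDerivAt H 0 t := fun t ht => by
    have hlin : HasDerivAt (fun t : ℝ => -μ * t) (-μ) t := by
      simpa using (hasDerivAt_id (t : ℂ)).comp_ofReal.const_mul (-μ)
    exact (hlin.cexp.mul (hg t ht)).congr_deriv (by ring)
  have hconst : H x = H y :=
    isOpen_Ioi.is_const_of_deriv_eq_zero isPreconnected_Ioi
      (fun t ht => (hH t ht).differentiableAt.differentiableWithinAt)
      (fun t ht => (hH t ht).deriv) hx (lt_of_lt_of_le hx hxy)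
  have hnorm : ∀ t : ℝ, ‖g t‖ = Real.exp (μ.re * t) * ‖H t‖ := fun t => by
    simp only [H, norm_mul, norm_exp, ← mul_assoc, ← Real.exp_add]
    simp
  rw [hnorm, hnorm, hconst]
  gcongr

theorem eq_zero_of_hasDerivAt_mul_self_of_tendsto {g : ℝ → ℂ} {μ : ℂ} {b : ℝ} (hμ : 0 ≤ μ.re)
    (hg : ∀ x, b < x → HasDerivAt g (μ * g x) x) (hlim : Tendsto g atTop (𝓝 0))
    {x : ℝ} (hx : b < x) : g x = 0 := by
  have hle : ‖g x‖ ≤ ‖(0 : ℂ)‖ := ge_of_tendsto hlim.norm <|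
    (eventually_ge_atTop x).mono fun y hy => norm_le_norm_of_hasDerivAt_mul_self hμ hg hx hy
  simpa using hle

theorem robin_of_radiation_atTop {u u' : ℝ → ℂ} {lam b : ℝ}
    (hu : ∀ x, b < x → HasDerivAt u (u' x) x)
    (hu' : ∀ x, b < x → HasDerivAt u' (-(lam : ℂ) ^ 2 * u x) x)
    (hrad : Tendsto (fun x => u' x - I * lam * u x) atTop (𝓝 0)) {x : ℝ} (hx : b < x) :
    u' x - I * lam * u x = 0 := by
  refine eq_zero_of_hasDerivAt_mul_self_of_tendsto (g := fun x => u' x - I * lam * u x)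
    (μ := -I * lam) (by simp)
    (fun t ht => ((hu' t ht).sub ((hu t ht).const_mul _)).congr_deriv ?_) hrad hx
  linear_combination (-(u t) * lam ^ 2) * I_sq

theorem HasDerivAt.comp_neg {𝕜 F : Type*} [NontriviallyNormedField 𝕜] [NormedAddCommGroup F]
    [NormedSpace 𝕜 F] {f : 𝕜 → F} {f' : F} {x : 𝕜} (hf : HasDerivAt f f' (-x)) :
    HasDerivAt (fun t => f (-t)) (-f') x := by
  simpa [Function.comp_def] using hf.scomp x (hasDerivAt_neg x)

theorem robin_of_radiation_atBot {u u' : ℝ → ℂ} {lam b : ℝ}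
    (hu : ∀ x, x < b → HasDerivAt u (u' x) x)
    (hu' : ∀ x, x < b → HasDerivAt u' (-(lam : ℂ) ^ 2 * u x) x)
    (hrad : Tendsto (fun x => u' x + I * lam * u x) atBot (𝓝 0)) {x : ℝ} (hx : x < b) :
    u' x + I * lam * u x = 0 := by
  have hrad' : Tendsto (fun t => -u' (-t) - I * lam * u (-t)) atTop (𝓝 0) := by
    have h := hrad.neg.comp tendsto_neg_atTop_atBot
    rw [neg_zero] at h
    refine h.congr fun t => ?_
    simp only [Function.comp_apply]
    ring
  have hrefl := robin_of_radiation_atTop (u := fun t => u (-t)) (u' := fun t => -u' (-t)) (b := -b)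
    (fun t ht => (hu (-t) (by linarith)).comp_neg)
    (fun t ht => (hu' (-t) (by linarith)).comp_neg.neg.congr_deriv (by ring)) hrad' (x := -x)
    (by linarith)
  simp only [neg_neg] at hrefl
  linear_combination -hrefl

theorem stmt11_general (lam : ℝ) (c : ℂ) (a : ℝ) (ha : 2 ≤ a)
    (ω f : ℝ → ℂ)
    (hωsupp : ∀ x : ℝ, x ∉ Set.Icc (-1 : ℝ) 1 → ω x = 0)
    (hfsupp : ∀ x : ℝ, x ∉ Set.Icc (-1 : ℝ) 1 → f x = 0)
    (u u' u'' : ℝ → ℂ)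
    (hderiv1 : ∀ x : ℝ, HasDerivAt u (u' x) x)
    (hderiv2 : ∀ x : ℝ, HasDerivAt u' (u'' x) x)
    (heq : ∀ x : ℝ, u'' x + ((lam : ℂ) ^ 2 + c * ω x) * u x = f x)
    (hradp : Tendsto (fun x : ℝ => u' x - Complex.I * (lam : ℂ) * u x) atTop (nhds 0))
    (hradm : Tendsto (fun x : ℝ => u' x + Complex.I * (lam : ℂ) * u x) atBot (nhds 0)) :
    u' (-a) + Complex.I * (lam : ℂ) * u (-a) = 0 ∧
    u' a - Complex.I * (lam : ℂ) * u a = 0 := by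
  have hfree : ∀ x, 1 < |x| → HasDerivAt u' (-(lam : ℂ) ^ 2 * u x) x := fun x hx => by
    have hout : x ∉ Set.Icc (-1 : ℝ) 1 := fun h => hx.not_ge (abs_le.mpr h)
    refine (hderiv2 x).congr_deriv ?_
    linear_combination heq x - c * u x * hωsupp x hout + hfsupp x hout
  exact ⟨robin_of_radiation_atBot (b := -1) (fun x _ => hderiv1 x)
      (fun x hx => hfree x (lt_abs.mpr (Or.inr (by linarith)))) hradm (by linarith),
    robin_of_radiation_atTop (b := 1) (fun x _ => hderiv1 x)
      (fun x hx => hfree x (lt_abs.mpr (Or.inl hx))) hradp (by linarith)⟩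

theorem stmt11 (lam : ℝ) (hlam : 0 < lam) (c : ℂ) (a : ℝ) (ha : 2 ≤ a)
    (ω f : ℝ → ℂ) (hω : Continuous ω) (hf : Continuous f)
    (hωsupp : ∀ x : ℝ, x ∉ Set.Icc (-1 : ℝ) 1 → ω x = 0)
    (hfsupp : ∀ x : ℝ, x ∉ Set.Icc (-1 : ℝ) 1 → f x = 0)
    (u u' u'' : ℝ → ℂ)
    (hderiv1 : ∀ x : ℝ, HasDerivAt u (u' x) x)
    (hderiv2 : ∀ x : ℝ, HasDerivAt u' (u'' x) x)
    (heq : ∀ x : ℝ, u'' x + ((lam : ℂ) ^ 2 + c * ω x) * u x = f x)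
    (hradp : Tendsto (fun x : ℝ => u' x - Complex.I * (lam : ℂ) * u x) atTop (nhds 0))
    (hradm : Tendsto (fun x : ℝ => u' x + Complex.I * (lam : ℂ) * u x) atBot (nhds 0)) :
    u' (-a) + Complex.I * (lam : ℂ) * u (-a) = 0 ∧
    u' a - Complex.I * (lam : ℂ) * u a = 0 :=
  stmt11_general lam c a ha ω f hωsupp hfsupp u u' u'' hderiv1 hderiv2 heq hradp hradm
end

section
/- Let λ > 0, c ∈ ℂ, a ≥ 2, and let ω, f : ℝ → ℂ be continuous functions vanishing outside [−1, 1]. Suppose v : [−a, a] → ℂ is twice continuously differentiable, satisfies v''(x) + (λ² + c ω(x)) v(x) = f(x) for all x ∈ [−a, a], and satisfies the Robin conditions v'(−a) + iλ v(−a) = 0 and v'(a) − iλ v(a) = 0. Define V : ℝ → ℂ by V(x) = v(x) for x ∈ [−a, a], V(x) = v(a) e^{iλ(x−a)} for x > a, and V(x) = v(−a) e^{−iλ(x+a)} for x < −a. Then V is twice continuously differentiable on ℝ, satisfies V''(x) + (λ² + c ω(x)) V(x) = f(x) for all x ∈ ℝ, and satisfies the radiation conditions: V'(x) − iλ V(x)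 = 0 for all x ≥ a and V'(x) + iλ V(x) = 0 for all x ≤ −a. -/
/-!
Outside `[-a, a]` the coefficient `ω` and the source `f` vanish, so there the equation is
`u'' + λ² u = 0`, solved by the outgoing waves `v(±a) e^{± iλ (x ∓ a)}`. Each wave satisfies
`u' = ± iλ u` and `u'' = -λ² u` identically; at `x = ±a` the Robin condition matches the first
derivative of `v`, and the equation at `±a` (where `ω = f = 0`) matches the second. So the
derivative of the glued function is the gluing of `v'` with the derivative waves, and the same
holds once more for `v''`.
-/

open Set Complex

section Gluing

variable {E : Type*}

noncomputable def glueIcc (p q : ℝ) (l m r : ℝ → E) (x : ℝ) : E :=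
  if x < p then l x else if x ≤ q then m x else r x

variable {p q : ℝ} {l m r l' m' r' : ℝ → E}

theorem glueIcc_eqOn_Iic (hpq : p ≤ q) (hp : l p = m p) :
    EqOn (glueIcc p q l m r) l (Iic p) := by
  intro x hx
  rcases (mem_Iic.1 hx).lt_or_eq with hx | rfl
  · simp [glueIcc, hx]
  · simp [glueIcc, hpq, hp]

theorem glueIcc_eqOn_Icc : EqOn (glueIcc p q l m r) m (Icc p q) := by
  intro x hx
  simp [glueIcc, not_lt.2 hx.1, hx.2]

theorem glueIcc_eqOn_Ici (hpq : p ≤ q) (hq : m q = r q) :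
    EqOn (glueIcc p q l m r) r (Ici q) := by
  intro x hx
  rcases (mem_Ici.1 hx).lt_or_eq with hx | rfl
  · simp [glueIcc, not_lt.2 (hpq.trans hx.le), not_le.2 hx]
  · simp [glueIcc, not_lt.2 hpq, hq]

theorem Iic_union_Icc_union_Ici (hpq : p ≤ q) : Iic p ∪ Icc p q ∪ Ici q = univ := by
  rw [Iic_union_Icc_eq_Iic hpq, Iic_union_Ici]

theorem continuous_glueIcc [TopologicalSpace E] (hpq : p ≤ q) (hl : Continuous l)
    (hm : ContinuousOn m (Icc p q)) (hr : Continuous r) (hp : l p = m p) (hq : m q = r q) :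
    Continuous (glueIcc p q l m r) := by
  rw [← continuousOn_univ, ← Iic_union_Icc_union_Ici hpq]
  refine ContinuousOn.union_of_isClosed (.union_of_isClosed ?_ ?_ isClosed_Iic isClosed_Icc)
    ?_ (isClosed_Iic.union isClosed_Icc) isClosed_Ici
  · exact hl.continuousOn.congr (glueIcc_eqOn_Iic hpq hp)
  · exact hm.congr glueIcc_eqOn_Icc
  · exact hr.continuousOn.congr (glueIcc_eqOn_Ici hpq hq)

variable [NormedAddCommGroup E] [NormedSpace ℝ E]

theorem hasDerivWithinAt_union_of_isClosed {f f' : ℝ → E} {s t : Set ℝ}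
    (hs : IsClosed s) (ht : IsClosed t)
    (hfs : ∀ x ∈ s, HasDerivWithinAt f (f' x) s x)
    (hft : ∀ x ∈ t, HasDerivWithinAt f (f' x) t x) (x : ℝ) :
    HasDerivWithinAt f (f' x) (s ∪ t) x := by
  have of_isClosed {u : Set ℝ} (hu : IsClosed u)
      (hfu : ∀ x ∈ u, HasDerivWithinAt f (f' x) u x) : HasDerivWithinAt f (f' x) u x := by
    by_cases hx : x ∈ u
    · exact hfu x hx
    · rw [hasDerivWithinAt_iff_hasFDerivWithinAt]
      exact HasFDerivWithinAt.of_notMem_closure (by rwa [hu.closure_eq])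
  exact (of_isClosed hs hfs).union (of_isClosed ht hft)

theorem contDiff_two_of_hasDerivAt {f f' f'' : ℝ → E}
    (hf : ∀ x, HasDerivAt f (f' x) x) (hf' : ∀ x, HasDerivAt f' (f'' x) x)
    (hf'' : Continuous f'') : ContDiff ℝ 2 f := by
  have hd : deriv f = f' := funext fun x => (hf x).deriv
  have hd' : deriv f' = f'' := funext fun x => (hf' x).deriv
  rw [show (2 : WithTop ℕ∞) = 1 + 1 from rfl, contDiff_succ_iff_deriv, hd,
    contDiff_one_iff_deriv, hd']
  exact ⟨fun x => (hf x).differentiableAt, by simp, fun x => (hf' x).differentiableAt, hf''⟩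

theorem hasDerivAt_glueIcc (hpq : p ≤ q) (hl : ∀ x, HasDerivAt l (l' x) x)
    (hm : ∀ x ∈ Icc p q, HasDerivWithinAt m (m' x) (Icc p q) x)
    (hr : ∀ x, HasDerivAt r (r' x) x) (hp : l p = m p) (hq : m q = r q)
    (hp' : l' p = m' p) (hq' : m' q = r' q) (x : ℝ) :
    HasDerivAt (glueIcc p q l m r) (glueIcc p q l' m' r' x) x := by
  have hleft : ∀ y ∈ Iic p,
      HasDerivWithinAt (glueIcc p q l m r) (glueIcc p q l' m' r' y) (Iic p) y :=
    fun y hy => by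
      rw [glueIcc_eqOn_Iic hpq hp' hy]
      exact (hl y).hasDerivWithinAt.congr_of_mem (glueIcc_eqOn_Iic hpq hp) hy
  have hmid : ∀ y ∈ Icc p q,
      HasDerivWithinAt (glueIcc p q l m r) (glueIcc p q l' m' r' y) (Icc p q) y :=
    fun y hy => by
      rw [glueIcc_eqOn_Icc hy]
      exact (hm y hy).congr_of_mem glueIcc_eqOn_Icc hy
  have hright : ∀ y ∈ Ici q,
      HasDerivWithinAt (glueIcc p q l m r) (glueIcc p q l' m' r' y) (Ici q) y :=
    fun y hy => by
      rw [glueIcc_eqOn_Ici hpq hq' hy]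
      exact (hr y).hasDerivWithinAt.congr_of_mem (glueIcc_eqOn_Ici hpq hq) hy
  have h := hasDerivWithinAt_union_of_isClosed (isClosed_Iic.union isClosed_Icc) isClosed_Ici
    (fun y _ => hasDerivWithinAt_union_of_isClosed isClosed_Iic isClosed_Icc hleft hmid y)
    hright x
  rwa [Iic_union_Icc_union_Ici hpq, hasDerivWithinAt_univ] at h

end Gluing

section OutgoingExtension

noncomputable def expWave (C κ : ℂ) (x₀ x : ℝ) : ℂ :=
  C * exp (κ * ((x - x₀ : ℝ) : ℂ))

theorem expWave_self (C κ : ℂ) (x₀ : ℝ) : expWave C κ x₀ x₀ = C := by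
  simp [expWave]

theorem expWave_mul_left (k C κ : ℂ) (x₀ x : ℝ) :
    expWave (k * C) κ x₀ x = k * expWave C κ x₀ x := by
  simp only [expWave, mul_assoc]

theorem hasDerivAt_expWave (C κ : ℂ) (x₀ x : ℝ) :
    HasDerivAt (expWave C κ x₀) (expWave (κ * C) κ x₀ x) x := by
  have hlin : HasDerivAt (fun y : ℝ => κ * ((y - x₀ : ℝ) : ℂ)) κ x := by
    simpa using (((hasDerivAt_id x).sub_const x₀).ofReal_comp).const_mul κ
  exact (hlin.cexp.const_mul C).congr_deriv (by simp only [expWave]; ring)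

theorem continuous_expWave (C κ : ℂ) (x₀ : ℝ) : Continuous (expWave C κ x₀) :=
  continuous_iff_continuousAt.2 fun x => (hasDerivAt_expWave C κ x₀ x).continuousAt

noncomputable def outgoingExt (lam a : ℝ) (u : ℝ → ℂ) : ℝ → ℂ :=
  glueIcc (-a) a (expWave (u (-a)) (-(I * lam)) (-a)) u (expWave (u a) (I * lam) a)

variable {lam a : ℝ} {u u' : ℝ → ℂ}

theorem outgoingExt_of_mem {x : ℝ} (hx : x ∈ Icc (-a) a) : outgoingExt lam a u x = u x :=
  glueIcc_eqOn_Icc hx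

theorem outgoingExt_of_le_neg (ha : 0 ≤ a) {x : ℝ} (hx : x ≤ -a) :
    outgoingExt lam a u x = expWave (u (-a)) (-(I * lam)) (-a) x :=
  glueIcc_eqOn_Iic (by linarith) (expWave_self _ _ _) hx

theorem outgoingExt_of_ge (ha : 0 ≤ a) {x : ℝ} (hx : a ≤ x) :
    outgoingExt lam a u x = expWave (u a) (I * lam) a x :=
  glueIcc_eqOn_Ici (by linarith) (expWave_self _ _ _).symm hx

theorem outgoingExt_eq_mul_of_le_neg (ha : 0 ≤ a) {k : ℂ} (h : u' (-a) = k * u (-a)) {x : ℝ}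
    (hx : x ≤ -a) : outgoingExt lam a u' x = k * outgoingExt lam a u x := by
  rw [outgoingExt_of_le_neg ha hx, outgoingExt_of_le_neg ha hx, h, expWave_mul_left]

theorem outgoingExt_eq_mul_of_ge (ha : 0 ≤ a) {k : ℂ} (h : u' a = k * u a) {x : ℝ}
    (hx : a ≤ x) : outgoingExt lam a u' x = k * outgoingExt lam a u x := by
  rw [outgoingExt_of_ge ha hx, outgoingExt_of_ge ha hx, h, expWave_mul_left]

theorem outgoingExt_eq_mul_of_notMem_Ioo (ha : 0 ≤ a) {k : ℂ} (hm : u' (-a) = k * u (-a))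
    (hp : u' a = k * u a) {x : ℝ} (hx : x ∉ Ioo (-a) a) :
    outgoingExt lam a u' x = k * outgoingExt lam a u x := by
  rcases not_and_or.1 hx with hx | hx
  · exact outgoingExt_eq_mul_of_le_neg ha hm (not_lt.1 hx)
  · exact outgoingExt_eq_mul_of_ge ha hp (not_lt.1 hx)

theorem eq_outgoingExt (ha : 0 ≤ a) {V : ℝ → ℂ} (h_mem : ∀ x ∈ Icc (-a) a, V x = u x)
    (h_gt : ∀ x, a < x → V x = u a * exp (I * lam * ((x - a : ℝ) : ℂ)))
    (h_lt : ∀ x, x < -a → V x = u (-a) * exp (-(I * lam * ((x + a : ℝ) : ℂ)))) :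
    V = outgoingExt lam a u := by
  funext x
  rcases lt_or_ge x (-a) with hx | hx
  · rw [h_lt x hx, outgoingExt_of_le_neg ha hx.le, expWave, sub_neg_eq_add, neg_mul]
  rcases le_or_gt x a with hx' | hx'
  · rw [h_mem x ⟨hx, hx'⟩, outgoingExt_of_mem ⟨hx, hx'⟩]
  · rw [h_gt x hx', outgoingExt_of_ge ha hx'.le, expWave]

theorem hasDerivAt_outgoingExt (ha : 0 ≤ a)
    (hu : ∀ x ∈ Icc (-a) a, HasDerivWithinAt u (u' x) (Icc (-a) a) x)
    (hrobin_neg : u' (-a) = -(I * lam) * u (-a)) (hrobin_pos : u' a = I * lam * u a) (x : ℝ) :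
    HasDerivAt (outgoingExt lam a u) (outgoingExt lam a u' x) x := by
  unfold outgoingExt
  rw [hrobin_neg, hrobin_pos]
  exact hasDerivAt_glueIcc (by linarith) (hasDerivAt_expWave _ _ _) hu (hasDerivAt_expWave _ _ _)
    (expWave_self _ _ _) (expWave_self _ _ _).symm (by rw [expWave_self, hrobin_neg])
    (by rw [expWave_self, hrobin_pos]) x

theorem continuous_outgoingExt (ha : 0 ≤ a) (hu : ContinuousOn u (Icc (-a) a)) :
    Continuous (outgoingExt lam a u) :=
  continuous_glueIcc (by linarith) (continuous_expWave _ _ _) hu (continuous_expWave _ _ _)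
    (expWave_self _ _ _) (expWave_self _ _ _).symm

end OutgoingExtension

theorem stmt12_general (lam : ℝ) (c : ℂ) (a : ℝ) (ha : 2 ≤ a)
    (ω f : ℝ → ℂ)
    (hωsupp : ∀ x : ℝ, x ∉ Set.Icc (-1 : ℝ) 1 → ω x = 0)
    (hfsupp : ∀ x : ℝ, x ∉ Set.Icc (-1 : ℝ) 1 → f x = 0)
    -- `v` is twice continuously differentiable on `[-a, a]`, with first and second
    -- derivatives `v'`, `v''` there
    (v v' v'' : ℝ → ℂ)
    (hderiv1 : ∀ x ∈ Set.Icc (-a) a, HasDerivWithinAt v (v' x) (Set.Icc (-a) a) x)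
    (hderiv2 : ∀ x ∈ Set.Icc (-a) a, HasDerivWithinAt v' (v'' x) (Set.Icc (-a) a) x)
    (hcont : ContinuousOn v'' (Set.Icc (-a) a))
    (heq : ∀ x ∈ Set.Icc (-a) a, v'' x + ((lam : ℂ) ^ 2 + c * ω x) * v x = f x)
    (hrobinm : v' (-a) + Complex.I * (lam : ℂ) * v (-a) = 0)
    (hrobinp : v' a - Complex.I * (lam : ℂ) * v a = 0)
    -- `V` is the piecewise extension of `v` by outgoing waves
    (V : ℝ → ℂ)
    (hV1 : ∀ x ∈ Set.Icc (-a) a, V x = v x)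
    (hV2 : ∀ x : ℝ, a < x → V x = v a * Complex.exp (Complex.I * (lam : ℂ) * ((x - a : ℝ) : ℂ)))
    (hV3 : ∀ x : ℝ, x < -a →
      V x = v (-a) * Complex.exp (-(Complex.I * (lam : ℂ) * ((x + a : ℝ) : ℂ)))) :
    ContDiff ℝ 2 V ∧
    (∀ x : ℝ, deriv (deriv V) x + ((lam : ℂ) ^ 2 + c * ω x) * V x = f x) ∧
    (∀ x : ℝ, a ≤ x → deriv V x - Complex.I * (lam : ℂ) * V x = 0) ∧
    (∀ x : ℝ, x ≤ -a → deriv V x + Complex.I * (lam : ℂ) * V x = 0) := by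
  have ha0 : 0 ≤ a := by linarith
  obtain rfl := eq_outgoingExt ha0 hV1 hV2 hV3
  have hsupp : ∀ x, x ∉ Ioo (-a) a → ω x = 0 ∧ f x = 0 := fun x hx =>
    have hx' : x ∉ Icc (-1 : ℝ) 1 := fun h => hx ⟨by linarith [h.1], by linarith [h.2]⟩
    ⟨hωsupp x hx', hfsupp x hx'⟩
  have hfree : ∀ x ∈ Icc (-a) a, x ∉ Ioo (-a) a → v'' x = (I * lam) ^ 2 * v x :=
    fun x hx hx' => by
      have h := heq x hx
      rw [(hsupp x hx').1, (hsupp x hx').2] at h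
      linear_combination h - (lam : ℂ) ^ 2 * v x * I_sq
  have hfree_neg := hfree (-a) (left_mem_Icc.2 (by linarith)) (by simp)
  have hfree_pos := hfree a (right_mem_Icc.2 (by linarith)) (by simp)
  have hv'm : v' (-a) = -(I * lam) * v (-a) := by linear_combination hrobinm
  have hv'p : v' a = I * lam * v a := by linear_combination hrobinp
  have hd1 := hasDerivAt_outgoingExt ha0 hderiv1 hv'm hv'p
  have hd2 := hasDerivAt_outgoingExt ha0 hderiv2 (by rw [hfree_neg, hv'm]; ring)
    (by rw [hfree_pos, hv'p]; ring)
  have hderiv : deriv (outgoingExt lam a v) = outgoingExt lam a v' := funext fun x => (hd1 x).deriv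
  have hderiv' : deriv (outgoingExt lam a v') = outgoingExt lam a v'' :=
    funext fun x => (hd2 x).deriv
  refine ⟨contDiff_two_of_hasDerivAt hd1 hd2 (continuous_outgoingExt ha0 hcont), fun x => ?_,
    fun x hx => ?_, fun x hx => ?_⟩
  · rw [hderiv, hderiv']
    by_cases hx : x ∈ Ioo (-a) a
    · rw [outgoingExt_of_mem (Ioo_subset_Icc_self hx), outgoingExt_of_mem (Ioo_subset_Icc_self hx)]
      exact heq x (Ioo_subset_Icc_self hx)
    rw [outgoingExt_eq_mul_of_notMem_Ioo ha0 hfree_neg hfree_pos hx, (hsupp x hx).1,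
      (hsupp x hx).2]
    linear_combination (lam : ℂ) ^ 2 * outgoingExt lam a v x * I_sq
  · rw [hderiv, outgoingExt_eq_mul_of_ge ha0 hv'p hx, sub_self]
  · rw [hderiv, outgoingExt_eq_mul_of_le_neg ha0 hv'm hx]; ring

theorem stmt12 (lam : ℝ) (hlam : 0 < lam) (c : ℂ) (a : ℝ) (ha : 2 ≤ a)
    (ω f : ℝ → ℂ) (hω : Continuous ω) (hf : Continuous f)
    (hωsupp : ∀ x : ℝ, x ∉ Set.Icc (-1 : ℝ) 1 → ω x = 0)
    (hfsupp : ∀ x : ℝ, x ∉ Set.Icc (-1 : ℝ) 1 → f x = 0)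
    -- `v` is twice continuously differentiable on `[-a, a]`, with first and second
    -- derivatives `v'`, `v''` there
    (v v' v'' : ℝ → ℂ)
    (hderiv1 : ∀ x ∈ Set.Icc (-a) a, HasDerivWithinAt v (v' x) (Set.Icc (-a) a) x)
    (hderiv2 : ∀ x ∈ Set.Icc (-a) a, HasDerivWithinAt v' (v'' x) (Set.Icc (-a) a) x)
    (hcont : ContinuousOn v'' (Set.Icc (-a) a))
    (heq : ∀ x ∈ Set.Icc (-a) a, v'' x + ((lam : ℂ) ^ 2 + c * ω x) * v x = f x)
    (hrobinm : v' (-a) + Complex.I * (lam : ℂ) * v (-a) = 0)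
    (hrobinp : v' a - Complex.I * (lam : ℂ) * v a = 0)
    -- `V` is the piecewise extension of `v` by outgoing waves
    (V : ℝ → ℂ)
    (hV1 : ∀ x ∈ Set.Icc (-a) a, V x = v x)
    (hV2 : ∀ x : ℝ, a < x → V x = v a * Complex.exp (Complex.I * (lam : ℂ) * ((x - a : ℝ) : ℂ)))
    (hV3 : ∀ x : ℝ, x < -a →
      V x = v (-a) * Complex.exp (-(Complex.I * (lam : ℂ) * ((x + a : ℝ) : ℂ)))) :
    ContDiff ℝ 2 V ∧
    (∀ x : ℝ, deriv (deriv V) x + ((lam : ℂ) ^ 2 + c * ω x) * V x = f x) ∧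
    (∀ x : ℝ, a ≤ x → deriv V x - Complex.I * (lam : ℂ) * V x = 0) ∧
    (∀ x : ℝ, x ≤ -a → deriv V x + Complex.I * (lam : ℂ) * V x = 0) :=
  stmt12_general lam c a ha ω f hωsupp hfsupp v v' v'' hderiv1 hderiv2 hcont heq hrobinm hrobinp V
    hV1 hV2 hV3
end

section
/- Let λ > 0 and let f : ℝ → ℂ be continuous with support contained in [−1, 1]. Define u(x) = (1/(2iλ)) ∫_{−1}^{1} f(s) e^{iλ|x−s|} ds. Then u is twice continuously differentiable on ℝ, u''(x) + λ² u(x) = f(x) for all x ∈ ℝ, and u satisfies the outgoing conditions u'(x) − iλ u(x) = 0 for all x ≥ 1 and u'(x) + iλ u(x) = 0 for all x ≤ −1. -/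
/-!
With `c = iλ`, split the integral at `x`: since `f` vanishes off `(-1, 1)`,
`2c u(x) = e^{cx} ∫_{-1}^x f(s) e^{-cs} ds + e^{-cx} ∫_x^1 f(s) e^{cs} ds` for every `x`.
The fundamental theorem of calculus gives `u' = (e^{cx} ∫_{-1}^x - e^{-cx} ∫_x^1) / 2` and
`u'' = c² u + f = f - λ² u`. For `x ≥ 1` the second piece vanishes, so `u' = c u`; for `x ≤ -1`
the first one does, so `u' = -c u`.
-/

open MeasureTheory Filter

open Set intervalIntegral

open scoped Complex

section ExpConvolution

variable {f : ℝ → ℂ} {c : ℂ} {a b x : ℝ}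

lemma Continuous.eq_zero_of_notMem_Ioo (hf : Continuous f) (hsupp : ∀ x ∉ Icc a b, f x = 0)
    (hx : x ∉ Ioo a b) : f x = 0 := by
  have hclosure : closure (Icc a b)ᶜ ⊆ {x | f x = 0} :=
    (isClosed_eq hf continuous_const).closure_subset_iff.2 hsupp
  exact hclosure (by rwa [closure_compl, interior_Icc])

lemma hasDerivAt_cexp_mul_ofReal (c : ℂ) (x : ℝ) :
    HasDerivAt (fun y : ℝ => cexp (c * y)) (c * cexp (c * x)) x := by
  simpa [mul_comm] using ((hasDerivAt_id x).ofReal_comp.const_mul c).cexp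

lemma cexp_mul_cexp_neg (z : ℂ) : cexp z * cexp (-z) = 1 := by
  rw [← Complex.exp_add, add_neg_cancel, Complex.exp_zero]

/-- `∫ s in a..x, f s * exp (c * (x - s))`, with the exponential taken out of the integral so that
it is differentiated by the product rule. -/
noncomputable def leftWave (c : ℂ) (f : ℝ → ℂ) (a x : ℝ) : ℂ :=
  cexp (c * x) * ∫ s in a..x, f s * cexp (-(c * s))

/-- `∫ s in x..b, f s * exp (c * (s - x))`. -/
noncomputable def rightWave (c : ℂ) (f : ℝ → ℂ) (b x : ℝ) : ℂ :=
  cexp (-(c * x)) * ∫ s in x..b, f s * cexp (c * s)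

lemma hasDerivAt_leftWave (hf : Continuous f) (c : ℂ) (a x : ℝ) :
    HasDerivAt (leftWave c f a) (c * leftWave c f a x + f x) x := by
  have hg : Continuous fun s : ℝ => f s * cexp (-(c * s)) := by fun_prop
  have := (hasDerivAt_cexp_mul_ofReal c x).mul (hg.integral_hasStrictDerivAt a x).hasDerivAt
  refine this.congr_deriv ?_
  rw [leftWave]
  linear_combination (f x) * cexp_mul_cexp_neg (c * x)

lemma hasDerivAt_rightWave (hf : Continuous f) (c : ℂ) (b x : ℝ) :
    HasDerivAt (rightWave c f b) (-(c * rightWave c f b x) - f x) x := by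
  have hg : Continuous fun s : ℝ => f s * cexp (c * s) := by fun_prop
  have hG : HasDerivAt (fun x => ∫ s in x..b, f s * cexp (c * s)) (-(f x * cexp (c * x))) x :=
    (integral_hasStrictDerivAt_left (hg.intervalIntegrable x b)
      (hg.stronglyMeasurableAtFilter _ _) hg.continuousAt).hasDerivAt
  have := (by simpa using hasDerivAt_cexp_mul_ofReal (-c) x :
    HasDerivAt (fun y : ℝ => cexp (-(c * y))) (-c * cexp (-(c * x))) x).mul hG
  refine this.congr_deriv ?_
  rw [rightWave]
  linear_combination (-f x) * cexp_mul_cexp_neg (c * x)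

lemma leftWave_eq_zero (hsupp : ∀ s ∉ Ioo a b, f s = 0) (hx : x ≤ a) : leftWave c f a x = 0 := by
  rw [leftWave, integral_zero_ae (Eventually.of_forall fun s hs => ?_), mul_zero]
  rw [uIoc_of_ge hx] at hs
  rw [hsupp s fun h => hs.2.not_gt h.1, zero_mul]

lemma rightWave_eq_zero (hsupp : ∀ s ∉ Ioo a b, f s = 0) (hx : b ≤ x) :
    rightWave c f b x = 0 := by
  rw [rightWave, integral_zero_ae (Eventually.of_forall fun s hs => ?_), mul_zero]
  rw [uIoc_of_ge hx] at hs
  rw [hsupp s fun h => hs.1.not_gt h.2, zero_mul]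

lemma integral_mul_cexp_abs_sub (hf : Continuous f) (hsupp : ∀ s ∉ Ioo a b, f s = 0) (c : ℂ)
    (x : ℝ) :
    ∫ s in a..b, f s * cexp (c * ((|x - s| : ℝ) : ℂ)) = leftWave c f a x + rightWave c f b x := by
  have hk : Continuous fun s : ℝ => f s * cexp (c * ((|x - s| : ℝ) : ℂ)) := by fun_prop
  rw [← integral_add_adjacent_intervals (hk.intervalIntegrable a x) (hk.intervalIntegrable x b),
    leftWave, rightWave, ← intervalIntegral.integral_const_mul,
    ← intervalIntegral.integral_const_mul]
  -- where `f s ≠ 0` we have `s ∈ (a, b)`, which fixes the sign of `x - s` on each piece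
  congr 1 <;> refine integral_congr fun s hs => ?_ <;> by_cases hfs : f s = 0
  · simp [hfs]
  · have hsa : a < s := by_contra fun h => hfs (hsupp s fun hs => h hs.1)
    have hsx : s ≤ x := (mem_uIcc.1 hs).elim (·.2) fun h => absurd h.2 (not_le.2 hsa)
    rw [abs_of_nonneg (sub_nonneg.2 hsx), Complex.ofReal_sub, mul_sub, sub_eq_add_neg,
      Complex.exp_add]
    ring
  · simp [hfs]
  · have hsb : s < b := by_contra fun h => hfs (hsupp s fun hs => h hs.2)
    have hxs : x ≤ s := (mem_uIcc.1 hs).elim (·.1) fun h => absurd h.1 (not_le.2 hsb)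
    rw [abs_sub_comm, abs_of_nonneg (sub_nonneg.2 hxs), Complex.ofReal_sub, mul_sub,
      sub_eq_add_neg, Complex.exp_add]
    ring

end ExpConvolution

lemma contDiff_two_of_hasDerivAt_s13 {𝕜 F : Type*} [NontriviallyNormedField 𝕜] [NormedAddCommGroup F]
    [NormedSpace 𝕜 F] {u v w : 𝕜 → F} (hu : ∀ x, HasDerivAt u (v x) x)
    (hv : ∀ x, HasDerivAt v (w x) x) (hw : Continuous w) : ContDiff 𝕜 2 u := by
  have hdu : deriv u = v := funext fun x => (hu x).deriv
  have hdv : deriv v = w := funext fun x => (hv x).deriv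
  rw [show (2 : WithTop ℕ∞) = 1 + 1 from rfl, contDiff_succ_iff_deriv, hdu, contDiff_one_iff_deriv,
    hdv]
  exact ⟨fun x => (hu x).differentiableAt, by simp, fun x => (hv x).differentiableAt, hw⟩

theorem stmt13 (lam : ℝ) (hlam : 0 < lam) (f : ℝ → ℂ) (hf : Continuous f)
    (hsupp : ∀ x : ℝ, x ∉ Set.Icc (-1 : ℝ) 1 → f x = 0)
    (u : ℝ → ℂ)
    (hu : ∀ x : ℝ, u x = (1 / (2 * Complex.I * (lam : ℂ))) *
        ∫ s in (-1 : ℝ)..1, f s * Complex.exp (Complex.I * (lam : ℂ) * ((|x - s| : ℝ) : ℂ))) :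
    ContDiff ℝ 2 u ∧
    (∀ x : ℝ, deriv (deriv u) x + (lam : ℂ) ^ 2 * u x = f x) ∧
    (∀ x : ℝ, 1 ≤ x → deriv u x - Complex.I * (lam : ℂ) * u x = 0) ∧
    (∀ x : ℝ, x ≤ -1 → deriv u x + Complex.I * (lam : ℂ) * u x = 0) := by
  set c : ℂ := Complex.I * lam with hc_def
  have hc : c ≠ 0 := mul_ne_zero Complex.I_ne_zero (Complex.ofReal_ne_zero.2 hlam.ne')
  have hlam_sq : (lam : ℂ) ^ 2 = -c ^ 2 := by rw [hc_def, mul_pow, Complex.I_sq]; ring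
  have hsupp' : ∀ s ∉ Ioo (-1 : ℝ) 1, f s = 0 := fun s => hf.eq_zero_of_notMem_Ioo hsupp
  set L := leftWave c f (-1)
  set R := rightWave c f 1
  have hu_eq : u = fun x => (2 * c)⁻¹ * (L x + R x) := funext fun x => by
    rw [hu x, integral_mul_cexp_abs_sub hf hsupp', one_div, mul_assoc]
  set v : ℝ → ℂ := fun x => (L x - R x) / 2
  have hu' : ∀ x, HasDerivAt u (v x) x := fun x => by
    rw [hu_eq]
    refine (((hasDerivAt_leftWave hf c (-1) x).add
      (hasDerivAt_rightWave hf c 1 x)).const_mul _).congr_deriv ?_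
    field_simp
    ring
  have hv' : ∀ x, HasDerivAt v (f x - lam ^ 2 * u x) x := fun x => by
    refine (((hasDerivAt_leftWave hf c (-1) x).sub
      (hasDerivAt_rightWave hf c 1 x)).div_const 2).congr_deriv ?_
    rw [hu_eq, hlam_sq]
    field_simp
    ring
  have hdu : deriv u = v := funext fun x => (hu' x).deriv
  refine ⟨contDiff_two_of_hasDerivAt_s13 hu' hv' ?_, fun x => ?_, fun x hx => ?_, fun x hx => ?_⟩
  · exact hf.sub (continuous_const.mul (continuous_iff_continuousAt.2 fun x => (hu' x).continuousAt))
  · rw [hdu, (hv' x).deriv]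
    ring
  · rw [hdu, hu_eq]
    simp only [v, R, rightWave_eq_zero hsupp' hx]
    field_simp
    ring
  · rw [hdu, hu_eq]
    simp only [v, L, leftWave_eq_zero hsupp' hx]
    field_simp
    ring
end
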